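/- Let (R,m) be a Noetherian local ring, n ≥ 2, f_1,...,f_n, f ∈ m, J = (f_1,...,f_n), I = (J, f), and J_i = (f_1,...,f_i) with J_0 = 0. Fix d ≥ 2. For i = 1,...,n+1 set T_{i,d} = ((J_{i-1}·I^{d-1} : f_i) ∩ I^{d-1}) / (J_{i-1}·I^{d-2}) where f_{n+1} = f. Then the following are equivalent for each i ≤ n+1: (i) the degree-d components of the first Koszul homology modules H_1(f_1 t,...,f_j t; R(I)) vanish for all j = 1,...,i; (ii) T_{j,d} = 0 for all j = 1,...,i. -/

import Mathlib

open Ideal Submodule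

variable {R : Type*} [CommRing R]

/-- The linear map `(a₁,…,aₘ) ↦ Σ aⱼ zⱼ`. -/
noncomputable def sumMul {m : ℕ} (z : Fin m → R) : (Fin m → R) →ₗ[R] R :=
  ∑ j, (LinearMap.proj j : (Fin m → R) →ₗ[R] R).smulRight (z j)

/-- The degree-`d` cycles of the Koszul complex of the degree-one elements
`z₁t,…,zₘt` on the Rees algebra of `I`: tuples with entries in `I^(d-1)`
that are syzygies of `z₁,…,zₘ`. -/
noncomputable def kosZ1 {m : ℕ} (I : Ideal R) (z : Fin m → R) (d : ℕ) :
    Submodule R (Fin m → R) :=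
  (⨅ j : Fin m, Submodule.comap (LinearMap.proj j) ((I ^ (d - 1) : Ideal R) : Submodule R R))
    ⊓ LinearMap.ker (sumMul z)

/-- The degree-`d` boundaries of the Koszul complex of `z₁t,…,zₘt` on the Rees algebra
of `I`: the span of the images `e_l ⊗ zⱼu - e_j ⊗ z_l u` of the Koszul differential
`∧²(Rᵐ) ⊗ I^(d-2) → Rᵐ ⊗ I^(d-1)`. -/
noncomputable def kosB1 {m : ℕ} (I : Ideal R) (z : Fin m → R) (d : ℕ) :
    Submodule R (Fin m → R) :=
  Submodule.span R {v | ∃ j l : Fin m, ∃ u ∈ I ^ (d - 2),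
    v = Pi.single l (z j * u) - Pi.single j (z l * u)}

/-- The degree-`d` component of the first Koszul homology `H₁(z₁t,…,zₘt; R(I))`. -/
noncomputable abbrev kosH1 {m : ℕ} (I : Ideal R) (z : Fin m → R) (d : ℕ) :=
  ↥(kosZ1 I z d) ⧸ (Submodule.comap (kosZ1 I z d).subtype (kosB1 I z d))

/-- The ideal `J_k = (f₁,…,f_k)` generated by the first `k` elements of the sequence. -/
noncomputable def Jpart {n : ℕ} (z : Fin (n + 1) → R) (k : ℕ) : Ideal R :=
  Ideal.span (z '' {l : Fin (n + 1) | (l : ℕ) < k})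

/-
A degree-`d` cycle of `z₁t,…,zₘ₊₁t` has its last entry in `(J'·I^(d-1) : zₘ₊₁) ∩ I^(d-1)`,
where `J' = (z₁,…,zₘ)`, while every boundary has its last entry in `J'·I^(d-2)`; cycles with
last entry `0` are cycles of `z₁t,…,zₘt`. So vanishing of `H₁` forces the colon condition, and
conversely, under the colon condition one subtracts from a cycle a boundary with the same last
entry and concludes by induction on `m`.
-/

section Koszul

variable {m d : ℕ} {I : Ideal R}

lemma sumMul_apply (z x : Fin m → R) : sumMul z x = ∑ j, x j * z j := by
  simp [sumMul, smul_eq_mul]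

lemma sumMul_single (z : Fin m → R) (k : Fin m) (c : R) :
    sumMul z (Pi.single k c) = c * z k := by
  rw [sumMul_apply, Finset.sum_eq_single k (fun b _ hb => by simp [hb]) (by simp)]
  simp

lemma subsingleton_kosH1_iff (z : Fin m → R) :
    Subsingleton (kosH1 I z d) ↔ kosZ1 I z d ≤ kosB1 I z d := by
  rw [Submodule.Quotient.subsingleton_iff, Submodule.comap_subtype_eq_top]

lemma mem_kosZ1_iff {z x : Fin m → R} :
    x ∈ kosZ1 I z d ↔ (∀ k, x k ∈ I ^ (d - 1)) ∧ ∑ k, x k * z k = 0 := by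
  simp [kosZ1, Submodule.mem_iInf, sumMul_apply]

lemma kosZ1_le_kosB1_of_fin_zero (z : Fin 0 → R) : kosZ1 I z d ≤ kosB1 I z d := by
  intro x _
  rw [Subsingleton.elim x 0]
  exact zero_mem _

lemma mul_mem_pow_pred {a b : R} (ha : a ∈ I) (hb : b ∈ I ^ (d - 2)) : a * b ∈ I ^ (d - 1) :=
  Ideal.pow_le_pow_right (by omega) (pow_succ' I (d - 2) ▸ Ideal.mul_mem_mul ha hb)

lemma kosB1_le_kosZ1 {z : Fin m → R} (hz : ∀ l, z l ∈ I) : kosB1 I z d ≤ kosZ1 I z d := by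
  rw [kosB1, Submodule.span_le]
  rintro v ⟨j, l, u, hu, rfl⟩
  refine mem_kosZ1_iff.mpr ⟨fun k => ?_, ?_⟩
  · simp only [Pi.sub_apply, Pi.single_apply]
    split_ifs <;> simp [sub_mem, mul_mem_pow_pred (hz _) hu]
  · rw [← sumMul_apply, map_sub, sumMul_single, sumMul_single]
    ring

lemma exists_eq_sum_mul_of_mem_span_range_mul (v : Fin m → R) (N : Ideal R) {x : R}
    (hx : x ∈ Ideal.span (Set.range v) * N) :
    ∃ c : Fin m → R, (∀ l, c l ∈ N) ∧ x = ∑ l, v l * c l := by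
  refine Submodule.mul_induction_on hx ?_ ?_
  · intro a ha b hb
    obtain ⟨r, rfl⟩ := (mem_span_range_iff_exists_fun R).mp ha
    refine ⟨fun l => r l * b, fun l => N.mul_mem_left _ hb, ?_⟩
    simp only [smul_eq_mul, Finset.sum_mul]
    exact Finset.sum_congr rfl fun l _ => by ring
  · rintro x y ⟨c, hc, rfl⟩ ⟨c', hc', rfl⟩
    refine ⟨c + c', fun l => add_mem (hc l) (hc' l), ?_⟩
    simp only [Pi.add_apply, mul_add, Finset.sum_add_distrib]

variable {z : Fin (m + 1) → R}

lemma kosB1_apply_last_mem {v : Fin (m + 1) → R} (hv : v ∈ kosB1 I z d) :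
    v (Fin.last m) ∈ Ideal.span (Set.range (z ∘ Fin.castSucc)) * I ^ (d - 2) := by
  let J' := Ideal.span (Set.range (z ∘ Fin.castSucc))
  have mem_J' : ∀ j : Fin (m + 1), j ≠ Fin.last m → z j ∈ J' := fun j hj =>
    Ideal.subset_span ⟨j.castPred hj, by simp⟩
  suffices kosB1 I z d ≤ Submodule.comap (LinearMap.proj (Fin.last m) : (Fin (m + 1) → R) →ₗ[R] R)
      (J' * I ^ (d - 2) : Ideal R) from this hv
  rw [kosB1, Submodule.span_le]
  rintro v ⟨j, l, u, hu, rfl⟩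
  simp only [SetLike.mem_coe, Submodule.mem_comap, LinearMap.proj_apply, Pi.sub_apply]
  rcases eq_or_ne l (Fin.last m) with rfl | hl <;> rcases eq_or_ne j (Fin.last m) with rfl | hj
  · simp
  · simpa [Pi.single_apply, hj] using Ideal.mul_mem_mul (mem_J' j hj) hu
  · simpa [Pi.single_apply, hl] using neg_mem (Ideal.mul_mem_mul (mem_J' l hl) hu)
  · simp [hl, hj]

lemma colon_inf_le_of_kosZ1_le_kosB1 (h : kosZ1 I z d ≤ kosB1 I z d) :
    Submodule.colon (Ideal.span (Set.range (z ∘ Fin.castSucc)) * I ^ (d - 1))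
        (Ideal.span {z (Fin.last m)}) ⊓ I ^ (d - 1) ≤
      Ideal.span (Set.range (z ∘ Fin.castSucc)) * I ^ (d - 2) := by
  rintro a ⟨ha_colon, ha_pow⟩
  rw [SetLike.mem_coe, Ideal.mem_colon_span_singleton] at ha_colon
  obtain ⟨c, hc, hsum⟩ := exists_eq_sum_mul_of_mem_span_range_mul _ _ ha_colon
  have hcycle : Fin.snoc (-c) a ∈ kosZ1 I z d := by
    refine mem_kosZ1_iff.mpr
      ⟨Fin.lastCases (by simpa using ha_pow) fun l => by simpa using neg_mem (hc l), ?_⟩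
    rw [Fin.sum_univ_castSucc]
    simp only [Fin.snoc_castSucc, Fin.snoc_last, hsum, Pi.neg_apply, Function.comp_apply,
      ← Finset.sum_add_distrib]
    exact Finset.sum_eq_zero fun l _ => by ring
  simpa using kosB1_apply_last_mem (h hcycle)

lemma apply_last_mem_colon_inf {x : Fin (m + 1) → R} (hx : x ∈ kosZ1 I z d) :
    x (Fin.last m) ∈ Submodule.colon (Ideal.span (Set.range (z ∘ Fin.castSucc)) * I ^ (d - 1))
        (Ideal.span {z (Fin.last m)}) ⊓ I ^ (d - 1) := by
  obtain ⟨hx_pow, hx_syz⟩ := mem_kosZ1_iff.mp hx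
  refine ⟨?_, hx_pow _⟩
  rw [SetLike.mem_coe, Ideal.mem_colon_span_singleton,
    eq_neg_of_add_eq_zero_right ((Fin.sum_univ_castSucc _).symm.trans hx_syz)]
  refine neg_mem (Submodule.sum_mem _ fun l _ => ?_)
  rw [mul_comm (x _)]
  exact Ideal.mul_mem_mul (Ideal.subset_span ⟨l, rfl⟩) (hx_pow _)

lemma exists_mem_kosB1_apply_last_eq {a : R}
    (ha : a ∈ Ideal.span (Set.range (z ∘ Fin.castSucc)) * I ^ (d - 2)) :
    ∃ b ∈ kosB1 I z d, b (Fin.last m) = a := by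
  obtain ⟨u, hu, rfl⟩ := exists_eq_sum_mul_of_mem_span_range_mul _ _ ha
  refine ⟨∑ l : Fin m, (Pi.single (Fin.last m) (z l.castSucc * u l) -
      Pi.single l.castSucc (z (Fin.last m) * u l)),
    Submodule.sum_mem _ fun l _ => Submodule.subset_span ⟨l.castSucc, _, u l, hu l, rfl⟩, ?_⟩
  simp [Finset.sum_apply, (Fin.castSucc_lt_last _).ne']

lemma comp_castSucc_mem_kosZ1 {x : Fin (m + 1) → R} (hx : x ∈ kosZ1 I z d)
    (hlast : x (Fin.last m) = 0) : x ∘ Fin.castSucc ∈ kosZ1 I (z ∘ Fin.castSucc) d := by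
  obtain ⟨hx_pow, hx_syz⟩ := mem_kosZ1_iff.mp hx
  refine mem_kosZ1_iff.mpr ⟨fun k => hx_pow _, ?_⟩
  simpa [Fin.sum_univ_castSucc, hlast] using hx_syz

noncomputable def snocZero : (Fin m → R) →ₗ[R] (Fin (m + 1) → R) :=
  LinearMap.pi (Fin.lastCases 0 LinearMap.proj)

lemma snocZero_apply (v : Fin m → R) : snocZero v = Fin.snoc v 0 := by
  funext k
  induction k using Fin.lastCases <;> simp [snocZero]

lemma snocZero_single (j : Fin m) (c : R) :
    snocZero (Pi.single j c) = Pi.single j.castSucc c := by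
  funext k
  induction k using Fin.lastCases with
  | last => simp [snocZero_apply, (Fin.castSucc_lt_last j).ne']
  | cast l => simp [snocZero_apply, Pi.single_apply]

lemma map_snocZero_kosB1_le : (kosB1 I (z ∘ Fin.castSucc) d).map snocZero ≤ kosB1 I z d := by
  rw [kosB1, Submodule.map_span, Submodule.span_le]
  rintro _ ⟨v, ⟨j, l, u, hu, rfl⟩, rfl⟩
  refine Submodule.subset_span ⟨j.castSucc, l.castSucc, u, hu, ?_⟩
  simp [snocZero_single]

lemma kosZ1_le_kosB1_of_colon_inf_le (hz : ∀ l, z l ∈ I)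
    (hprev : kosZ1 I (z ∘ Fin.castSucc) d ≤ kosB1 I (z ∘ Fin.castSucc) d)
    (hcolon : Submodule.colon (Ideal.span (Set.range (z ∘ Fin.castSucc)) * I ^ (d - 1))
        (Ideal.span {z (Fin.last m)}) ⊓ I ^ (d - 1) ≤
      Ideal.span (Set.range (z ∘ Fin.castSucc)) * I ^ (d - 2)) :
    kosZ1 I z d ≤ kosB1 I z d := by
  intro x hx
  obtain ⟨b, hb, hb_last⟩ := exists_mem_kosB1_apply_last_eq (hcolon (apply_last_mem_colon_inf hx))
  have hxb : x - b ∈ kosZ1 I z d := sub_mem hx (kosB1_le_kosZ1 hz hb)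
  have hxb_last : (x - b) (Fin.last m) = 0 := by simp [hb_last]
  have hrestrict := hprev (comp_castSucc_mem_kosZ1 hxb hxb_last)
  have hxb_eq : x - b = snocZero ((x - b) ∘ Fin.castSucc) := by
    rw [snocZero_apply, ← hxb_last]
    exact (Fin.snoc_init_self _).symm
  rw [← sub_add_cancel x b, hxb_eq]
  exact add_mem (map_snocZero_kosB1_le ⟨_, hrestrict, rfl⟩) hb

end Koszul

lemma Jpart_eq_span_range {n m : ℕ} (w : Fin (n + 1) → R) (h : m + 1 ≤ n + 1) :
    Jpart w m = Ideal.span (Set.range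
      ((fun l : Fin (m + 1) => w (Fin.castLE h l)) ∘ Fin.castSucc)) := by
  unfold Jpart
  congr 1
  ext x
  constructor
  · rintro ⟨l, hl, rfl⟩
    exact ⟨⟨l.1, hl⟩, rfl⟩
  · rintro ⟨k, rfl⟩
    exact ⟨Fin.castLE h k.castSucc, by simp, rfl⟩

theorem forall_subsingleton_kosH1_iff {n : ℕ} (w : Fin (n + 1) → R) (I : Ideal R)
    (hw : ∀ l, w l ∈ I) (d i : ℕ) (hi : i ≤ n + 1) :
    (∀ j : ℕ, 1 ≤ j → ∀ hj2 : j ≤ i,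
        Subsingleton (kosH1 I (fun l : Fin j => w (Fin.castLE (le_trans hj2 hi) l)) d)) ↔
    (∀ j : ℕ, ∀ (hj1 : 1 ≤ j) (hj2 : j ≤ i),
        Submodule.colon (Jpart w (j - 1) * I ^ (d - 1))
            (Ideal.span {w ⟨j - 1, Nat.sub_one_lt_of_le hj1 (hj2.trans hi)⟩}) ⊓ I ^ (d - 1) ≤
          Jpart w (j - 1) * I ^ (d - 2)) := by
  simp only [subsingleton_kosH1_iff]
  constructor
  · rintro H (_ | m) _ hj2
    · omega
    · simp only [Nat.add_sub_cancel]
      rw [Jpart_eq_span_range w (hj2.trans hi)]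
      exact colon_inf_le_of_kosZ1_le_kosB1 (H (m + 1) (by omega) hj2)
  · intro H
    have hcycles : ∀ m (hm : m ≤ n + 1), m ≤ i →
        kosZ1 I (fun l : Fin m => w (Fin.castLE hm l)) d ≤
          kosB1 I (fun l : Fin m => w (Fin.castLE hm l)) d := by
      intro m
      induction m with
      | zero => exact fun _ _ => kosZ1_le_kosB1_of_fin_zero _
      | succ m ih =>
        intro hm him
        refine kosZ1_le_kosB1_of_colon_inf_le (fun l => hw _) (ih (by omega) (by omega)) ?_
        have hcolon := H (m + 1) (by omega) him
        simp only [Nat.add_sub_cancel] at hcolon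
        rwa [Jpart_eq_span_range w hm] at hcolon
    exact fun j _ hj2 => hcycles j _ hj2

theorem stmt6 {R : Type*} [CommRing R]
    {n : ℕ} (g : Fin n → R) (f : R)
    (J I : Ideal R) (hJ : J = Ideal.span (Set.range g)) (hI : I = J ⊔ Ideal.span {f})
    (d : ℕ) (i : ℕ) (hi : i ≤ n + 1) :
    (∀ j : ℕ, ∀ (hj1 : 1 ≤ j) (hj2 : j ≤ i),
        Subsingleton (kosH1 I
          (fun l : Fin j => (Fin.snoc g f : Fin (n + 1) → R) (Fin.castLE (le_trans hj2 hi) l)) d)) ↔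
    (∀ j : ℕ, ∀ (hj1 : 1 ≤ j) (hj2 : j ≤ i),
        Submodule.colon (Jpart (Fin.snoc g f) (j - 1) * I ^ (d - 1))
            (Ideal.span {(Fin.snoc g f : Fin (n + 1) → R) (⟨j - 1, by omega⟩ : Fin (n + 1))}) ⊓ I ^ (d - 1) ≤
          Jpart (Fin.snoc g f) (j - 1) * I ^ (d - 2)) := by
  have hw : ∀ l, (Fin.snoc g f : Fin (n + 1) → R) l ∈ I := by
    refine Fin.lastCases ?_ fun l => ?_
    · rw [Fin.snoc_last, hI]
      exact Ideal.mem_sup_right (Ideal.mem_span_singleton_self f)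
    · rw [Fin.snoc_castSucc, hI, hJ]
      exact Ideal.mem_sup_left (Ideal.subset_span ⟨l, rfl⟩)
  exact forall_subsingleton_kosH1_iff _ I hw d i hi
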